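/- arXiv:math/0603144 — 2 statements merged into one kernel-verified Lean document; each statement's English description precedes it below -/
import Mathlib

section
/- For complex numbers q with |q|<1 and u with |u|<1, and any nonnegative integer n, the q-Euler number H_{n,q}(u^{-1}) defined by the generating function (1-u)∑_{l=0}^∞ u^l e^{[l]_q t} = ∑_{n=0}^∞ H_{n,q}(u^{-1}) t^n/n! satisfies H_{n,q}(u^{-1}) = ((1-u)/(1-q)^n) ∑_{l=0}^n C(n,l) (-1)^l / (1 - u q^l). -/
/-!
Expanding `(1 - q ^ l) ^ n` by the binomial theorem turns `u ^ l (1 - q ^ l) ^ n` into a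
finite combination of the geometric terms `(u q ^ k) ^ l`, whose ratios have norm `< 1`;
summing the geometric series termwise gives the closed form.
-/

open Finset

theorem one_sub_pow_pow_eq_sum {R : Type*} [CommRing R] (x : R) (l n : ℕ) :
    (1 - x ^ l) ^ n = ∑ k ∈ range (n + 1), (n.choose k : R) * (-1) ^ k * (x ^ k) ^ l := by
  rw [sub_eq_neg_add, add_pow]
  refine sum_congr rfl fun k _ => ?_
  rw [neg_pow, one_pow, ← pow_mul, mul_comm l k, pow_mul]
  ring

section NormedField

variable {𝕜 : Type*} [NormedField 𝕜] {q u : 𝕜}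

theorem norm_mul_pow_lt_one (hu : ‖u‖ < 1) (hq : ‖q‖ ≤ 1) (k : ℕ) : ‖u * q ^ k‖ < 1 :=
  calc ‖u * q ^ k‖ = ‖u‖ * ‖q‖ ^ k := by rw [norm_mul, norm_pow]
    _ ≤ ‖u‖ := mul_le_of_le_one_right (norm_nonneg u) (pow_le_one₀ (norm_nonneg q) hq)
    _ < 1 := hu

theorem hasSum_pow_mul_one_sub_pow_pow (hu : ‖u‖ < 1) (hq : ‖q‖ ≤ 1) (n : ℕ) :
    HasSum (fun l : ℕ => u ^ l * (1 - q ^ l) ^ n)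
      (∑ k ∈ range (n + 1), (n.choose k : 𝕜) * (-1) ^ k / (1 - u * q ^ k)) := by
  have hterm : (fun l : ℕ => u ^ l * (1 - q ^ l) ^ n) =
      fun l => ∑ k ∈ range (n + 1), (n.choose k : 𝕜) * (-1) ^ k * (u * q ^ k) ^ l := by
    funext l
    rw [one_sub_pow_pow_eq_sum, mul_sum]
    refine sum_congr rfl fun k _ => ?_
    ring
  rw [hterm]
  refine hasSum_sum fun k _ => ?_
  rw [div_eq_mul_inv]
  exact (hasSum_geometric_of_norm_lt_one (norm_mul_pow_lt_one hu hq k)).mul_left _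

end NormedField

/-- q-Euler number closed form. -/
theorem stmt_0 (q u : ℂ) (hq : ‖q‖ < 1) (hu : ‖u‖ < 1) (n : ℕ) :
    (1 - u) * ∑' l : ℕ, u ^ l * ((1 - q ^ l) / (1 - q)) ^ n =
      ((1 - u) / (1 - q) ^ n) *
        ∑ l ∈ Finset.range (n + 1), (n.choose l : ℂ) * (-1) ^ l / (1 - u * q ^ l) := by
  have hsum : HasSum (fun l : ℕ => u ^ l * ((1 - q ^ l) / (1 - q)) ^ n)
      ((∑ l ∈ range (n + 1), (n.choose l : ℂ) * (-1) ^ l / (1 - u * q ^ l)) / (1 - q) ^ n) := by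
    simpa only [div_pow, mul_div_assoc] using
      (hasSum_pow_mul_one_sub_pow_pow hu hq.le n).div_const ((1 - q) ^ n)
  rw [hsum.tsum_eq, div_mul_eq_mul_div, mul_div_assoc]
end

section
/- For complex q with |q|<1, u with |u|<1, positive integer r, x>0, and nonnegative integer n, the multiple q-Euler polynomial satisfies H^{(r)}_{n,q}(u^{-1},x) = (1-u)^r (1/(1-q))^n ∑_{j=0}^n C(n,j) (-1)^j q^{jx} / (1-uq^j)^r. -/
/-!
Binomially, `((1 - q ^ (x + N)) / (1 - q)) ^ n = (1 - q)⁻ⁿ ∑ⱼ C(n, j) (-1) ^ j q ^ (j x) (q ^ j) ^ N`,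
so the multiple sum splits into `n + 1` series `∑_f (u q ^ j) ^ (f 1 + ⋯ + f r)`. Each of these is
an `r`-fold product of geometric series with ratio `‖u q ^ j‖ < 1`, hence equals `(1 - u q ^ j)⁻ʳ`.
-/

open Finset

lemma pow_sum_comp_consEquiv {M : Type*} [Monoid M] (w : M) (r : ℕ) :
    (fun f : Fin (r + 1) → ℕ => w ^ ∑ i, f i) ∘ Fin.consEquiv (fun _ => ℕ) =
      fun p : ℕ × (Fin r → ℕ) => w ^ p.1 * w ^ ∑ i, p.2 i := by
  ext p
  simp [Fin.sum_cons, pow_add]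

lemma summable_pow_sum_fin_of_nonneg {w : ℝ} (h0 : 0 ≤ w) (h1 : w < 1) (r : ℕ) :
    Summable fun f : Fin r → ℕ => w ^ ∑ i, f i := by
  induction r with
  | zero => exact (hasSum_fintype _).summable
  | succ r ih =>
    have hprod : Summable fun p : ℕ × (Fin r → ℕ) => w ^ p.1 * w ^ ∑ i, p.2 i := by
      apply (summable_geometric_of_lt_one h0 h1).mul_of_nonneg ih <;>
        exact fun _ => pow_nonneg h0 _
    rwa [← (Fin.consEquiv fun _ : Fin (r + 1) => ℕ).summable_iff, pow_sum_comp_consEquiv w r]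

lemma hasSum_pow_sum_fin {𝕜 : Type*} [NormedField 𝕜] [CompleteSpace 𝕜] {w : 𝕜} (hw : ‖w‖ < 1)
    (r : ℕ) : HasSum (fun f : Fin r → ℕ => w ^ ∑ i, f i) ((1 - w)⁻¹ ^ r) := by
  induction r with
  | zero => simp
  | succ r ih =>
    have hgeom : Summable fun n : ℕ => ‖w ^ n‖ := by
      simpa only [norm_pow] using summable_geometric_of_lt_one (norm_nonneg w) hw
    have hpi : Summable fun f : Fin r → ℕ => ‖w ^ ∑ i, f i‖ := by
      simpa only [norm_pow] using summable_pow_sum_fin_of_nonneg (norm_nonneg w) hw r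
    have hprod : HasSum (fun p : ℕ × (Fin r → ℕ) => w ^ p.1 * w ^ ∑ i, p.2 i)
        ((1 - w)⁻¹ * (1 - w)⁻¹ ^ r) := by
      apply (hasSum_geometric_of_norm_lt_one hw).mul ih
      apply summable_mul_of_summable_norm hgeom hpi
    rwa [← (Fin.consEquiv fun _ : Fin (r + 1) => ℕ).hasSum_iff, pow_sum_comp_consEquiv w r,
      pow_succ']

lemma one_sub_pow_eq_sum {R : Type*} [CommRing R] (a : R) (n : ℕ) :
    (1 - a) ^ n = ∑ j ∈ range (n + 1), (n.choose j : R) * (-1) ^ j * a ^ j := by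
  rw [sub_eq_add_neg, add_comm, add_pow]
  refine sum_congr rfl fun j _ => ?_
  rw [neg_pow]
  ring

-- For `q = 0` the identity relies on `0 ^ z = 0`, which holds only for `z ≠ 0`.
lemma cpow_ofReal_add_natCast_pow {x : ℝ} (hx : 0 < x) (q : ℂ) (N j : ℕ) :
    (q ^ ((x : ℂ) + N)) ^ j = q ^ ((j : ℂ) * x) * (q ^ j) ^ N := by
  rcases eq_or_ne q 0 with rfl | hq
  · have hxN : (x : ℂ) + N ≠ 0 := by
      have : 0 < x + N := by positivity
      exact_mod_cast this.ne'
    rcases eq_or_ne j 0 with rfl | hj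
    · simp
    · have hjx : (j : ℂ) * x ≠ 0 := mul_ne_zero (by exact_mod_cast hj) (by exact_mod_cast hx.ne')
      simp [Complex.zero_cpow hxN, Complex.zero_cpow hjx, hj]
  · rw [← Complex.cpow_nat_mul, mul_add, Complex.cpow_add _ _ hq, ← pow_mul, ← Complex.cpow_natCast]
    push_cast
    ring_nf

theorem stmt_17_general (q u : ℂ) (hq : ‖q‖ < 1) (hu : ‖u‖ < 1)
    (r : ℕ) (x : ℝ) (hx : 0 < x) (n : ℕ) :
    (1 - u) ^ r *
        ∑' f : Fin r → ℕ,
          u ^ (∑ i, f i) * ((1 - q ^ ((x : ℂ) + (∑ i, f i : ℕ))) / (1 - q)) ^ n =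
      (1 - u) ^ r * (1 / (1 - q)) ^ n *
        ∑ j ∈ Finset.range (n + 1),
          (n.choose j : ℂ) * (-1) ^ j * q ^ ((j : ℂ) * x) / (1 - u * q ^ j) ^ r := by
  have hratio (j : ℕ) : ‖u * q ^ j‖ < 1 := by
    rw [norm_mul, norm_pow]
    exact mul_lt_one_of_nonneg_of_lt_one_left (norm_nonneg u) hu
      (pow_le_one₀ (norm_nonneg q) hq.le)
  have hexpand (N : ℕ) : u ^ N * ((1 - q ^ ((x : ℂ) + N)) / (1 - q)) ^ n =
      (1 / (1 - q)) ^ n * ∑ j ∈ range (n + 1),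
        (n.choose j : ℂ) * (-1) ^ j * q ^ ((j : ℂ) * x) * (u * q ^ j) ^ N := by
    rw [div_pow, one_sub_pow_eq_sum (q ^ ((x : ℂ) + N)), sum_div, mul_sum, mul_sum]
    refine sum_congr rfl fun j _ => ?_
    rw [cpow_ofReal_add_natCast_pow hx]
    ring
  have hsum : HasSum (fun f : Fin r → ℕ =>
      u ^ (∑ i, f i) * ((1 - q ^ ((x : ℂ) + (∑ i, f i : ℕ))) / (1 - q)) ^ n)
      ((1 / (1 - q)) ^ n * ∑ j ∈ range (n + 1),
        (n.choose j : ℂ) * (-1) ^ j * q ^ ((j : ℂ) * x) / (1 - u * q ^ j) ^ r) := by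
    simp_rw [hexpand]
    refine HasSum.mul_left _ (hasSum_sum fun j _ => ?_)
    simpa [div_eq_mul_inv, inv_pow] using (hasSum_pow_sum_fin (hratio j) r).mul_left
      ((n.choose j : ℂ) * (-1) ^ j * q ^ ((j : ℂ) * x))
  rw [hsum.tsum_eq, mul_assoc]

/-- Closed form of the multiple q-Euler polynomial. -/
theorem stmt_17 (q u : ℂ) (hq : ‖q‖ < 1) (hu : ‖u‖ < 1)
    (r : ℕ) (hr : 0 < r) (x : ℝ) (hx : 0 < x) (n : ℕ) :
    (1 - u) ^ r *
        ∑' f : Fin r → ℕ,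
          u ^ (∑ i, f i) * ((1 - q ^ ((x : ℂ) + (∑ i, f i : ℕ))) / (1 - q)) ^ n =
      (1 - u) ^ r * (1 / (1 - q)) ^ n *
        ∑ j ∈ Finset.range (n + 1),
          (n.choose j : ℂ) * (-1) ^ j * q ^ ((j : ℂ) * x) / (1 - u * q ^ j) ^ r :=
  stmt_17_general q u hq hu r x hx n
end
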